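/- arXiv:2007.04594 — 3 statements merged into one kernel-verified Lean document; each statement's English description precedes it below -/
import Mathlib

section
/- Let F : ℝ^n × ℝ^m → ℝ^n and G : ℝ^n × ℝ^m → ℝ^m be continuously differentiable, and let (U*, M*) satisfy F(U*, M*) = 0 and G(U*, M*) = 0. Denote F_u = ∂F/∂U(U*,M*) ∈ ℝ^{n×n}, F_m = ∂F/∂M(U*,M*) ∈ ℝ^{n×m}, G_u = ∂G/∂U(U*,M*) ∈ ℝ^{m×n}, G_m = ∂G/∂M(U*,M*) ∈ ℝ^{m×m}, and assume F_u and G_m are invertible. If the spectral radius ρ := ρ(G_m^{-1} G_u F_u^{-1} F_m) < 1, then the alternating sweeping iteration converges locally in M: there exist neighborhoods 𝒰 of U* and ℳ of M* such that for every pair of sequences (U_k)_{k≥1} ⊆ 𝒰 and (M_k)_{k≥0} ⊆ ℳ satisfying F(U_k, M_{k-1}) = 0 and G(U_k, M_k) = 0 for all k ≥ 1, one has M_k → M*, and moreover limsup_{k→∞} ‖M_k − M*‖^{1/k} ≤ ρ. -/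
/-!
Write `e_k = M_k - M*` and `A = Gm⁻¹ Gu Fu⁻¹ Fm`. Linearising `F(U_k, M_{k-1}) = 0` and
`G(U_k, M_k) = 0` at `(U*, M*)` and solving through `Fu⁻¹` and `Gm⁻¹` gives
`e_k = A e_{k-1} + o(e_{k-1})`. For any `q > ρ(A)`, Gelfand's formula provides a power with
`‖Aᴶ‖ < qᴶ`, hence a norm equivalent to the sup norm in which `A` contracts by a factor `< q`.
A small enough relative perturbation keeps the contraction, so `‖e_k‖ = O(qᵏ)`. Taking `q < 1`
and neighbourhoods on which the perturbation is that small gives convergence; along the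
converging sequence the perturbation is then relatively negligible, so every `q > ρ(A)`
bounds `limsup ‖e_k‖^{1/k}`.
-/

open Filter Topology

/-- The spectral radius of a square real matrix: the maximum of the moduli of
its complex eigenvalues. -/
noncomputable def specRad {n : ℕ} (A : Matrix (Fin n) (Fin n) ℝ) : ℝ :=
  sSup ((fun z : ℂ => ‖z‖) '' spectrum ℂ (A.map (algebraMap ℝ ℂ)))

open Asymptotics
open scoped Matrix Matrix.Norms.Operator

lemma specRad_nonneg {n : ℕ} (A : Matrix (Fin n) (Fin n) ℝ) : 0 ≤ specRad A :=
  Real.sSup_nonneg (by rintro _ ⟨z, -, rfl⟩; exact norm_nonneg z)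

lemma spectralRadius_map_complex_le_specRad {n : ℕ} (A : Matrix (Fin n) (Fin n) ℝ) :
    spectralRadius ℂ (A.map (algebraMap ℝ ℂ)) ≤ ENNReal.ofReal (specRad A) := by
  refine iSup₂_le fun z hz => ?_
  have hbdd :=
    ((spectrum.isCompact (A.map (algebraMap ℝ ℂ))).image (continuous_norm (E := ℂ))).bddAbove
  rw [← enorm_eq_nnnorm, ← ofReal_norm]
  exact ENNReal.ofReal_le_ofReal (le_csSup hbdd ⟨z, hz, rfl⟩)

lemma Matrix.linfty_opNorm_map_complex {ι : Type*} [Fintype ι] (A : Matrix ι ι ℝ) :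
    ‖A.map (algebraMap ℝ ℂ)‖ = ‖A‖ := by
  simp [Matrix.linfty_opNorm_def]

lemma exists_norm_pow_le_of_specRad_lt {n : ℕ} (A : Matrix (Fin n) (Fin n) ℝ) {r : ℝ}
    (hr : specRad A < r) : ∃ J, 0 < J ∧ ‖A ^ J‖ ≤ r ^ J := by
  set B := A.map (algebraMap ℝ ℂ)
  have hlt : spectralRadius ℂ B < ENNReal.ofReal r :=
    (spectralRadius_map_complex_le_specRad A).trans_lt
      ((ENNReal.ofReal_lt_ofReal_iff ((specRad_nonneg A).trans_lt hr)).mpr hr)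
  obtain ⟨J, hJ, hBJ⟩ := ((eventually_gt_atTop 0).and
    ((spectrum.pow_nnnorm_pow_one_div_tendsto_nhds_spectralRadius B).eventually_lt_const
      hlt)).exists
  refine ⟨J, hJ, ?_⟩
  have hpow : B ^ J = (A ^ J).map (algebraMap ℝ ℂ) :=
    (map_pow (algebraMap ℝ ℂ).mapMatrix A J).symm
  rw [← Matrix.linfty_opNorm_map_complex, ← hpow]
  have hr0 : 0 ≤ r := (specRad_nonneg A).trans hr.le
  have := ENNReal.pow_le_pow_left (n := J) hBJ.le
  rw [← ENNReal.rpow_natCast, ← ENNReal.rpow_mul, one_div_mul_cancel (by positivity),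
    ENNReal.rpow_one, ← ENNReal.ofReal_pow hr0, ← enorm_eq_nnnorm, ← ofReal_norm] at this
  exact (ENNReal.ofReal_le_ofReal_iff (by positivity)).mp this

/-- With `N x = ∑_{j<J} ‖Aʲ x‖ / rʲ`, the sum `N (A x)` is `r` times the same sum shifted by
one, and the new last term `‖Aᴶ x‖ / rᴶ` is at most the dropped first term `‖x‖`. -/
lemma Matrix.exists_adapted_norm {ι : Type*} [Fintype ι] [DecidableEq ι] (A : Matrix ι ι ℝ)
    {r : ℝ} (hr : 0 < r) {J : ℕ} (hJ : 0 < J) (hAJ : ‖A ^ J‖ ≤ r ^ J) :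
    ∃ (N : (ι → ℝ) → ℝ) (C : ℝ), 0 < C ∧ (∀ x, ‖x‖ ≤ N x) ∧ (∀ x, N x ≤ C * ‖x‖) ∧
      (∀ x y, N (x + y) ≤ N x + N y) ∧ (∀ x, N (A *ᵥ x) ≤ r * N x) := by
  set g : ℕ → (ι → ℝ) → ℝ := fun j x => ‖(A ^ j) *ᵥ x‖ / r ^ j
  have hg_le (j : ℕ) (x : ι → ℝ) : g j x ≤ ‖A ^ j‖ / r ^ j * ‖x‖ := by
    rw [div_mul_eq_mul_div]
    show ‖(A ^ j) *ᵥ x‖ / r ^ j ≤ _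
    gcongr
    exact Matrix.linfty_opNorm_mulVec _ _
  have hg_zero (x : ι → ℝ) : g 0 x = ‖x‖ := by simp [g]
  have hg_J (x : ι → ℝ) : g J x ≤ ‖x‖ := (hg_le J x).trans <| by
    have : ‖A ^ J‖ / r ^ J ≤ 1 := (div_le_one (by positivity)).mpr hAJ
    nlinarith [norm_nonneg x]
  have hg_shift (j : ℕ) (x : ι → ℝ) : g j (A *ᵥ x) = r * g (j + 1) x := by
    show ‖A ^ j *ᵥ (A *ᵥ x)‖ / r ^ j = r * (‖A ^ (j + 1) *ᵥ x‖ / r ^ (j + 1))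
    rw [Matrix.mulVec_mulVec, ← pow_succ, pow_succ r]
    field_simp
  refine ⟨fun x => ∑ j ∈ Finset.range J, g j x, ∑ j ∈ Finset.range J, ‖A ^ j‖ / r ^ j + 1,
    by positivity, fun x => ?_, fun x => ?_, fun x y => ?_, fun x => ?_⟩ <;> dsimp only
  · rw [← hg_zero x]
    exact Finset.single_le_sum (f := (g · x)) (fun j _ => by positivity)
      (Finset.mem_range.mpr hJ)
  · grw [Finset.sum_le_sum fun j _ => hg_le j x, ← Finset.sum_mul]
    nlinarith [norm_nonneg x]
  · rw [← Finset.sum_add_distrib]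
    refine Finset.sum_le_sum fun j _ => ?_
    show ‖A ^ j *ᵥ (x + y)‖ / r ^ j ≤ ‖A ^ j *ᵥ x‖ / r ^ j + ‖A ^ j *ᵥ y‖ / r ^ j
    rw [← add_div, Matrix.mulVec_add]
    gcongr
    exact norm_add_le _ _
  · have := Finset.sum_range_succ' (fun j => g j x) J
    rw [Finset.sum_range_succ, hg_zero] at this
    simp only [hg_shift, ← Finset.mul_sum]
    nlinarith [hg_J x]

lemma eventually_le_mul_pow_of_eventually_le_mul {a : ℕ → ℝ} {q : ℝ} (hq : 0 < q)
    (h : ∀ᶠ k in atTop, a (k + 1) ≤ q * a k) : ∃ B, ∀ᶠ k in atTop, a k ≤ B * q ^ k := by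
  obtain ⟨k₀, hk₀⟩ := eventually_atTop.mp h
  refine ⟨a k₀ / q ^ k₀, eventually_atTop.mpr ⟨k₀, fun k hk => ?_⟩⟩
  induction k, hk using Nat.le_induction with
  | base => rw [div_mul_cancel₀ _ (by positivity)]
  | succ k hk ih =>
    calc a (k + 1) ≤ q * a k := hk₀ k hk
      _ ≤ q * (a k₀ / q ^ k₀ * q ^ k) := by gcongr
      _ = a k₀ / q ^ k₀ * q ^ (k + 1) := by ring

lemma limsup_rpow_inv_le_of_eventually_le_mul_pow {a : ℕ → ℝ} (ha : ∀ k, 0 ≤ a k) {B q : ℝ}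
    (hq : 0 < q) (h : ∀ᶠ k in atTop, a k ≤ B * q ^ k) :
    limsup (fun k : ℕ => a k ^ (k : ℝ)⁻¹) atTop ≤ q := by
  set B' := max B 1
  have hB' : 0 < B' := lt_max_of_lt_right one_pos
  have hbound : ∀ᶠ k : ℕ in atTop, a k ^ (k : ℝ)⁻¹ ≤ B' ^ (k : ℝ)⁻¹ * q := by
    filter_upwards [h, eventually_gt_atTop 0] with k hk hk0
    calc a k ^ (k : ℝ)⁻¹ ≤ (B' * q ^ k) ^ (k : ℝ)⁻¹ :=
          Real.rpow_le_rpow (ha k) (hk.trans (by gcongr; exact le_max_left _ _)) (by positivity)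
      _ = B' ^ (k : ℝ)⁻¹ * q := by
          rw [Real.mul_rpow hB'.le (by positivity), ← Real.rpow_natCast, ← Real.rpow_mul hq.le,
            mul_inv_cancel₀ (by positivity), Real.rpow_one]
  have hlim : Tendsto (fun k : ℕ => B' ^ (k : ℝ)⁻¹ * q) atTop (𝓝 q) := by
    simpa using ((tendsto_const_nhds (x := B')).rpow tendsto_inv_atTop_nhds_zero_nat
      (Or.inl hB'.ne')).mul_const q
  calc limsup (fun k : ℕ => a k ^ (k : ℝ)⁻¹) atTop
      ≤ limsup (fun k : ℕ => B' ^ (k : ℝ)⁻¹ * q) atTop :=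
        limsup_le_limsup hbound
          (isCoboundedUnder_le_of_le atTop fun k => Real.rpow_nonneg (ha k) _)
          hlim.isBoundedUnder_le
    _ = q := hlim.limsup_eq

lemma exists_eventually_norm_le_mul_pow_of_perturbation {n : ℕ} (A : Matrix (Fin n) (Fin n) ℝ)
    {q : ℝ} (hq : specRad A < q) :
    ∃ c > 0, ∀ e : ℕ → Fin n → ℝ, (∀ᶠ k in atTop, ‖e (k + 1) - A *ᵥ e k‖ ≤ c * ‖e k‖) →
      ∃ B, ∀ᶠ k in atTop, ‖e k‖ ≤ B * q ^ k := by
  have hρ := specRad_nonneg A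
  obtain ⟨r, hrA, hrq⟩ := exists_between hq
  obtain ⟨J, hJ, hAJ⟩ := exists_norm_pow_le_of_specRad_lt A hrA
  obtain ⟨N, C, hC, hN_ge, hN_le, hN_add, hN_A⟩ :=
    A.exists_adapted_norm (hρ.trans_lt hrA) hJ hAJ
  refine ⟨(q - r) / C, div_pos (by linarith) hC, fun e he => ?_⟩
  have hstep : ∀ᶠ k in atTop, N (e (k + 1)) ≤ q * N (e k) := he.mono fun k hk => by
    have hpert : C * ‖e (k + 1) - A *ᵥ e k‖ ≤ (q - r) * ‖e k‖ :=
      (mul_le_mul_of_nonneg_left hk hC.le).trans_eq (by field_simp)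
    calc N (e (k + 1)) = N (A *ᵥ e k + (e (k + 1) - A *ᵥ e k)) := by rw [add_sub_cancel]
      _ ≤ r * N (e k) + C * ‖e (k + 1) - A *ᵥ e k‖ :=
        (hN_add _ _).trans (add_le_add (hN_A _) (hN_le _))
      _ ≤ q * N (e k) := by nlinarith [hN_ge (e k)]
  obtain ⟨B, hB⟩ :=
    eventually_le_mul_pow_of_eventually_le_mul (a := fun k => N (e k)) (hρ.trans_lt hq) hstep
  exact ⟨B, hB.mono fun k hk => (hN_ge _).trans hk⟩

lemma exists_tendsto_zero_of_perturbation {n : ℕ} (A : Matrix (Fin n) (Fin n) ℝ)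
    (hA : specRad A < 1) :
    ∃ c > 0, ∀ e : ℕ → Fin n → ℝ, (∀ᶠ k in atTop, ‖e (k + 1) - A *ᵥ e k‖ ≤ c * ‖e k‖) →
      Tendsto e atTop (𝓝 0) := by
  obtain ⟨q, hAq, hq⟩ := exists_between hA
  obtain ⟨c, hc, hcontr⟩ := exists_eventually_norm_le_mul_pow_of_perturbation A hAq
  refine ⟨c, hc, fun e he => ?_⟩
  obtain ⟨B, hB⟩ := hcontr e he
  refine squeeze_zero_norm' hB ?_
  simpa using
    (tendsto_pow_atTop_nhds_zero_of_lt_one ((specRad_nonneg A).trans hAq.le) hq).const_mul B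

lemma limsup_norm_rpow_inv_le_specRad_of_isLittleO {n : ℕ} (A : Matrix (Fin n) (Fin n) ℝ)
    {e : ℕ → Fin n → ℝ} (he : (fun k => e (k + 1) - A *ᵥ e k) =o[atTop] e) :
    limsup (fun k : ℕ => ‖e k‖ ^ (k : ℝ)⁻¹) atTop ≤ specRad A := by
  refine le_of_forall_gt_imp_ge_of_dense fun q hq => ?_
  obtain ⟨c, hc, hcontr⟩ := exists_eventually_norm_le_mul_pow_of_perturbation A hq
  obtain ⟨B, hB⟩ := hcontr e (he.def hc)
  exact limsup_rpow_inv_le_of_eventually_le_mul_pow (fun k => norm_nonneg _)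
    ((specRad_nonneg A).trans_lt hq) hB

lemma Asymptotics.IsBigO.of_sub_isLittleO {α E F : Type*} [SeminormedAddCommGroup E] [Norm F]
    {l : Filter α} {f a : α → E} {g : α → F} (ha : a =O[l] g)
    (hfa : (fun x => f x - a x) =o[l] f) : f =O[l] g :=
  hfa.right_isBigO_sub.trans (by simpa using ha)

lemma HasFDerivAt.isLittleO_of_eventually_eq_zero {𝕜 E F α : Type*} [NontriviallyNormedField 𝕜]
    [NormedAddCommGroup E] [NormedSpace 𝕜 E] [NormedAddCommGroup F] [NormedSpace 𝕜 F]
    {f : E → F} {f' : E →L[𝕜] F} {x₀ : E} (hf : HasFDerivAt f f' x₀) (hx₀ : f x₀ = 0)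
    {l : Filter α} {g : α → E} (hg : Tendsto g l (𝓝 x₀)) (hzero : ∀ᶠ a in l, f (g a) = 0) :
    (fun a => f' (g a - x₀)) =o[l] (fun a => g a - x₀) :=
  (hf.isLittleO.comp_tendsto hg).neg_left.congr' (hzero.mono fun a ha => by simp [ha, hx₀])
    EventuallyEq.rfl

lemma Matrix.isBigO_mulVec {α ι κ R : Type*} [Fintype ι] [Fintype κ] [NonUnitalSeminormedRing R]
    (B : Matrix ι κ R) (f : α → κ → R) (l : Filter α) : (fun x => B *ᵥ f x) =O[l] f :=
  IsBigO.of_bound ‖B‖ (Eventually.of_forall fun x => Matrix.linfty_opNorm_mulVec B (f x))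

lemma Matrix.inv_mulVec_mulVec_add_mulVec {ι κ R : Type*} [Fintype ι] [DecidableEq ι] [Fintype κ]
    [CommRing R] {P : Matrix ι ι R} (hP : IsUnit P) (Q : Matrix ι κ R) (x : ι → R) (y : κ → R) :
    P⁻¹ *ᵥ (P *ᵥ x + Q *ᵥ y) = x + (P⁻¹ * Q) *ᵥ y := by
  rw [Matrix.mulVec_add, Matrix.mulVec_mulVec, Matrix.mulVec_mulVec,
    Matrix.nonsing_inv_mul _ ((Matrix.isUnit_iff_isUnit_det P).mp hP), Matrix.one_mulVec]

lemma exists_mem_nhds_forall_prod_prod {X Y : Type*} [TopologicalSpace X] [TopologicalSpace Y]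
    {x : X} {y : Y} {P : X × Y × Y → Prop} (h : ∀ᶠ p in 𝓝 (x, y, y), P p) :
    ∃ U ∈ 𝓝 x, ∃ V ∈ 𝓝 y, ∀ u ∈ U, ∀ v ∈ V, ∀ w ∈ V, P (u, v, w) := by
  rw [nhds_prod_eq, nhds_prod_eq] at h
  obtain ⟨U, hU, W, hW, hUW⟩ := mem_prod_iff.mp h
  obtain ⟨V₁, hV₁, V₂, hV₂, hV⟩ := mem_prod_iff.mp hW
  exact ⟨U, hU, V₁ ∩ V₂, inter_mem hV₁ hV₂,
    fun u hu v hv w hw => hUW ⟨hu, hV ⟨hv.1, hw.2⟩⟩⟩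

section Sweep

variable {n m : ℕ} {F : (Fin n → ℝ) × (Fin m → ℝ) → Fin n → ℝ}
  {G : (Fin n → ℝ) × (Fin m → ℝ) → Fin m → ℝ} {Ustar : Fin n → ℝ} {Mstar : Fin m → ℝ}
  {Fu : Matrix (Fin n) (Fin n) ℝ} {Fm : Matrix (Fin n) (Fin m) ℝ}
  {Gu : Matrix (Fin m) (Fin n) ℝ} {Gm : Matrix (Fin m) (Fin m) ℝ}

/-- The triples `(U_k, M_{k-1}, M_k)` that one step of the sweep can produce. -/
def sweepSet (F : (Fin n → ℝ) × (Fin m → ℝ) → Fin n → ℝ)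
    (G : (Fin n → ℝ) × (Fin m → ℝ) → Fin m → ℝ) : Set ((Fin n → ℝ) × (Fin m → ℝ) × (Fin m → ℝ)) :=
  {p | F (p.1, p.2.1) = 0 ∧ G (p.1, p.2.2) = 0}

/-- The linearised sweep, mapping `M_{k-1} - M*` to `(U_k - U*, M_{k-1} - M*, M_k - M*)`. -/
noncomputable def linearSweep (Fu : Matrix (Fin n) (Fin n) ℝ) (Fm : Matrix (Fin n) (Fin m) ℝ)
    (Gu : Matrix (Fin m) (Fin n) ℝ) (Gm : Matrix (Fin m) (Fin m) ℝ) (y : Fin m → ℝ) :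
    (Fin n → ℝ) × (Fin m → ℝ) × (Fin m → ℝ) :=
  (-((Fu⁻¹ * Fm) *ᵥ y), y, (Gm⁻¹ * Gu * Fu⁻¹ * Fm) *ᵥ y)

lemma isBigO_linearSweep {α : Type*} (f : α → Fin m → ℝ) (l : Filter α) :
    (fun x => linearSweep Fu Fm Gu Gm (f x)) =O[l] f :=
  ((Matrix.isBigO_mulVec _ f l).neg_left).prod_left
    ((isBigO_refl f l).prod_left (Matrix.isBigO_mulVec _ f l))

lemma sub_linearSweep_eq (hFu : IsUnit Fu) (hGm : IsUnit Gm) (x : Fin n → ℝ) (y' y : Fin m → ℝ) :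
    (x, y', y) - linearSweep Fu Fm Gu Gm y' =
      (Fu⁻¹ *ᵥ (Fu *ᵥ x + Fm *ᵥ y'), 0,
        Gm⁻¹ *ᵥ (Gu *ᵥ x + Gm *ᵥ y) - (Gm⁻¹ * Gu * Fu⁻¹) *ᵥ (Fu *ᵥ x + Fm *ᵥ y')) := by
  rw [Matrix.inv_mulVec_mulVec_add_mulVec hFu, add_comm (Gu *ᵥ x),
    Matrix.inv_mulVec_mulVec_add_mulVec hGm, ← Matrix.mulVec_mulVec (M := Gm⁻¹ * Gu),
    Matrix.inv_mulVec_mulVec_add_mulVec hFu]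
  simp only [linearSweep, Prod.mk_sub_mk, Prod.mk.injEq, sub_neg_eq_add, sub_self, true_and,
    Matrix.mulVec_add, Matrix.mulVec_mulVec, Matrix.mul_assoc]
  abel

lemma isLittleO_mulVec_add_mulVec_of_eventually_eq_zero {k : ℕ}
    {H : (Fin n → ℝ) × (Fin m → ℝ) → Fin k → ℝ}
    {Hu : Matrix (Fin k) (Fin n) ℝ} {Hm : Matrix (Fin k) (Fin m) ℝ}
    (hH : DifferentiableAt ℝ H (Ustar, Mstar)) (hH₀ : H (Ustar, Mstar) = 0)
    (hdH : ∀ du dm, fderiv ℝ H (Ustar, Mstar) (du, dm) = Hu *ᵥ du + Hm *ᵥ dm)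
    {α : Type*} {l : Filter α} {u : α → Fin n → ℝ} {v : α → Fin m → ℝ}
    (hu : Tendsto u l (𝓝 Ustar)) (hv : Tendsto v l (𝓝 Mstar))
    (hzero : ∀ᶠ a in l, H (u a, v a) = 0) :
    (fun a => Hu *ᵥ (u a - Ustar) + Hm *ᵥ (v a - Mstar))
      =o[l] (fun a => (u a - Ustar, v a - Mstar)) := by
  simpa [hdH] using hH.hasFDerivAt.isLittleO_of_eventually_eq_zero hH₀ (hu.prodMk_nhds hv) hzero

/-- On `sweepSet` both `F` and `G` vanish, so their linear parts are `o` of the deviation from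
`(U*, M*, M*)`; solving them through `Fu⁻¹` and `Gm⁻¹` recovers `linearSweep`. -/
lemma isLittleO_sub_linearSweep (hF : DifferentiableAt ℝ F (Ustar, Mstar))
    (hG : DifferentiableAt ℝ G (Ustar, Mstar)) (hFstar : F (Ustar, Mstar) = 0)
    (hGstar : G (Ustar, Mstar) = 0)
    (hdF : ∀ du dm, fderiv ℝ F (Ustar, Mstar) (du, dm) = Fu *ᵥ du + Fm *ᵥ dm)
    (hdG : ∀ du dm, fderiv ℝ G (Ustar, Mstar) (du, dm) = Gu *ᵥ du + Gm *ᵥ dm)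
    (hFu : IsUnit Fu) (hGm : IsUnit Gm) :
    (fun p => p - (Ustar, Mstar, Mstar) - linearSweep Fu Fm Gu Gm (p.2.1 - Mstar))
      =o[𝓝[sweepSet F G] (Ustar, Mstar, Mstar)] (fun p => p - (Ustar, Mstar, Mstar)) := by
  set p₀ := (Ustar, Mstar, Mstar)
  set l := 𝓝[sweepSet F G] p₀
  have hp : Tendsto id l (𝓝 p₀) := nhdsWithin_le_nhds
  have hF_lin := (isLittleO_mulVec_add_mulVec_of_eventually_eq_zero hF hFstar hdF
    hp.fst_nhds hp.snd_nhds.fst_nhds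
    (eventually_mem_nhdsWithin.mono fun p (hp : p ∈ sweepSet F G) => hp.1)).trans_isBigO
    (isBigO_of_le l fun p => max_le_max le_rfl (le_max_left _ _) : _ =O[l] fun p => p - p₀)
  have hG_lin := (isLittleO_mulVec_add_mulVec_of_eventually_eq_zero hG hGstar hdG
    hp.fst_nhds hp.snd_nhds.snd_nhds
    (eventually_mem_nhdsWithin.mono fun p (hp : p ∈ sweepSet F G) => hp.2)).trans_isBigO
    (isBigO_of_le l fun p => max_le_max le_rfl (le_max_right _ _) : _ =O[l] fun p => p - p₀)
  have hmul {k j : ℕ} (B : Matrix (Fin k) (Fin j) ℝ) {f : _ → Fin j → ℝ}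
      (hf : f =o[l] fun p => p - p₀) :
      (fun p => B *ᵥ f p) =o[l] fun p => p - p₀ :=
    (Matrix.isBigO_mulVec B f l).trans_isLittleO hf
  refine ((hmul Fu⁻¹ hF_lin).prod_left ((isLittleO_zero _ l).prod_left
    ((hmul Gm⁻¹ hG_lin).sub (hmul (Gm⁻¹ * Gu * Fu⁻¹) hF_lin)))).congr_left fun p => ?_
  exact (sub_linearSweep_eq hFu hGm _ _ _).symm

lemma isBigO_sub_of_isLittleO_sub_linearSweep
    {l : Filter ((Fin n → ℝ) × (Fin m → ℝ) × (Fin m → ℝ))}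
    (h : (fun p => p - (Ustar, Mstar, Mstar) - linearSweep Fu Fm Gu Gm (p.2.1 - Mstar))
      =o[l] (fun p => p - (Ustar, Mstar, Mstar))) :
    (fun p => p - (Ustar, Mstar, Mstar)) =O[l] (fun p => p.2.1 - Mstar) :=
  (isBigO_linearSweep _ l).of_sub_isLittleO h

lemma isLittleO_residual_of_isLittleO_sub_linearSweep
    {l : Filter ((Fin n → ℝ) × (Fin m → ℝ) × (Fin m → ℝ))}
    (h : (fun p => p - (Ustar, Mstar, Mstar) - linearSweep Fu Fm Gu Gm (p.2.1 - Mstar))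
      =o[l] (fun p => p - (Ustar, Mstar, Mstar))) :
    (fun p => p.2.2 - Mstar - (Gm⁻¹ * Gu * Fu⁻¹ * Fm) *ᵥ (p.2.1 - Mstar))
      =o[l] (fun p => p.2.1 - Mstar) :=
  ((isBigO_snd_prod' (f' := fun p =>
      (p - (Ustar, Mstar, Mstar) - linearSweep Fu Fm Gu Gm (p.2.1 - Mstar)).2)).trans
    isBigO_snd_prod').trans_isLittleO
      (h.trans_isBigO (isBigO_sub_of_isLittleO_sub_linearSweep h))

end Sweep

theorem alternating_sweeping_local_convergence_in_M (n m : ℕ)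
    (F : (Fin n → ℝ) × (Fin m → ℝ) → (Fin n → ℝ))
    (G : (Fin n → ℝ) × (Fin m → ℝ) → (Fin m → ℝ))
    (hF : ContDiff ℝ 1 F) (hG : ContDiff ℝ 1 G)
    (Ustar : Fin n → ℝ) (Mstar : Fin m → ℝ)
    (hFstar : F (Ustar, Mstar) = 0) (hGstar : G (Ustar, Mstar) = 0)
    (Fu : Matrix (Fin n) (Fin n) ℝ) (Fm : Matrix (Fin n) (Fin m) ℝ)
    (Gu : Matrix (Fin m) (Fin n) ℝ) (Gm : Matrix (Fin m) (Fin m) ℝ)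
    (hdF : ∀ (du : Fin n → ℝ) (dm : Fin m → ℝ),
      fderiv ℝ F (Ustar, Mstar) (du, dm) = Fu.mulVec du + Fm.mulVec dm)
    (hdG : ∀ (du : Fin n → ℝ) (dm : Fin m → ℝ),
      fderiv ℝ G (Ustar, Mstar) (du, dm) = Gu.mulVec du + Gm.mulVec dm)
    (hFu : IsUnit Fu) (hGm : IsUnit Gm)
    (hρ : specRad (Gm⁻¹ * Gu * Fu⁻¹ * Fm) < 1) :
    ∃ 𝒰 ∈ 𝓝 Ustar, ∃ ℳ ∈ 𝓝 Mstar,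
      ∀ (U : ℕ → (Fin n → ℝ)) (M : ℕ → (Fin m → ℝ)),
        (∀ k, 1 ≤ k → U k ∈ 𝒰) → (∀ k, M k ∈ ℳ) →
        (∀ k, 1 ≤ k → F (U k, M (k - 1)) = 0 ∧ G (U k, M k) = 0) →
        Tendsto M atTop (𝓝 Mstar) ∧
        Filter.limsup (fun k : ℕ => ‖M k - Mstar‖ ^ ((k : ℝ)⁻¹)) atTop
          ≤ specRad (Gm⁻¹ * Gu * Fu⁻¹ * Fm) := by
  have hlin := isLittleO_sub_linearSweep ((hF.differentiable one_ne_zero).differentiableAt)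
    ((hG.differentiable one_ne_zero).differentiableAt) hFstar hGstar hdF hdG hFu hGm
  have hres := isLittleO_residual_of_isLittleO_sub_linearSweep hlin
  obtain ⟨L, hL⟩ := (isBigO_sub_of_isLittleO_sub_linearSweep hlin).bound
  obtain ⟨c, hc, hconv⟩ := exists_tendsto_zero_of_perturbation _ hρ
  obtain ⟨𝒰, h𝒰, ℳ, hℳ, hnear⟩ :=
    exists_mem_nhds_forall_prod_prod (eventually_nhdsWithin_iff.mp (hL.and (hres.def hc)))
  refine ⟨𝒰, h𝒰, ℳ, hℳ, fun U M hU hM hsweep => ?_⟩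
  set p : ℕ → (Fin n → ℝ) × (Fin m → ℝ) × (Fin m → ℝ) := fun k => (U (k + 1), M k, M (k + 1))
  have hp (k : ℕ) : p k ∈ sweepSet F G := by simpa [p, sweepSet] using hsweep (k + 1) k.succ_pos
  have hbound (k : ℕ) := hnear _ (hU _ k.succ_pos) _ (hM k) _ (hM (k + 1)) (hp k)
  have hM_lim : Tendsto (fun k => M k - Mstar) atTop (𝓝 0) :=
    hconv _ (Eventually.of_forall fun k => (hbound k).2)
  have hp_lim : Tendsto p atTop (𝓝[sweepSet F G] (Ustar, Mstar, Mstar)) :=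
    tendsto_nhdsWithin_iff.mpr ⟨tendsto_sub_nhds_zero_iff.mp (squeeze_zero_norm
      (fun k => (hbound k).1) (by simpa using hM_lim.norm.const_mul L)), Eventually.of_forall hp⟩
  exact ⟨tendsto_sub_nhds_zero_iff.mp hM_lim,
    limsup_norm_rpow_inv_le_specRad_of_isLittleO _ (hres.comp_tendsto hp_lim)⟩
end

section
/- Let N ≥ 1, h > 0, τ > 0, ν ∈ ℝ, and let m, m' : ZMod N → ℝ be grid functions (indices modulo N). Define the discrete operator (𝓛w)_i = −ν (w_{i+1} − 2w_i + w_{i−1})/h², and for grid functions P1, P2 : ZMod N → ℝ define B_i(m; P1, P2) = (1/(2h))·[3 m_i P1_i − 4 m_{i−1} P1_{i−1} + m_{i−2} P1_{i−2} − 3 m_i P2_i + 4 m_{i+1} P2_{i+1} − m_{i+2} P2_{i+2}]. Suppose m and m' satisfy the Crank–Nicolson step of the discrete Kolmogorov–Fokker–Planck equation: for all i, (m'_i − m_i)/τ = (1/2)·[(𝓛(m + m'))_i − B_i(m; P1, P2) − B_i(m'; P1', P2')] for some grid functions P1, P2, P1', P2'. Then the total mass is conserved: h · Σ_{i ∈ ZMod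 N} m_i = h · Σ_{i ∈ ZMod N} m'_i. -/
/-!
Each of `𝓛` and `B` is a linear combination of translates of grid functions whose
coefficients sum to zero, and summation over `ZMod N` is translation invariant, so both
sum to zero over the grid. Summing the scheme over all `i` thus gives
`∑ (m' - m) / τ = 0`.
-/

/-- The second-order discretization of the transport term
`∇·(m ∇_p H)` on the periodic grid, with `P1`, `P2` the partial derivatives of
the discrete Hamiltonian with respect to the backward and forward difference
arguments. -/
noncomputable def Bop {N : ℕ} (h : ℝ) (m P1 P2 : ZMod N → ℝ) (i : ZMod N) : ℝ :=
  (1 / (2 * h)) *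
    (3 * m i * P1 i - 4 * m (i - 1) * P1 (i - 1) + m (i - 2) * P1 (i - 2)
      - 3 * m i * P2 i + 4 * m (i + 1) * P2 (i + 1) - m (i + 2) * P2 (i + 2))

/-- The three-point central difference discretization `𝓛` of `-ν Δ`. -/
noncomputable def Lop {N : ℕ} (h ν : ℝ) (w : ZMod N → ℝ) (i : ZMod N) : ℝ :=
  -ν * (w (i + 1) - 2 * w i + w (i - 1)) / h ^ 2

section Translation

variable {G M : Type*} [AddGroup G] [Fintype G] [AddCommMonoid M]

theorem Fintype.sum_comp_add_const (f : G → M) (c : G) :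
    ∑ i, f (i + c) = ∑ i, f i :=
  Equiv.sum_comp (Equiv.addRight c) f

theorem Fintype.sum_comp_sub_const (f : G → M) (c : G) :
    ∑ i, f (i - c) = ∑ i, f i :=
  Equiv.sum_comp (Equiv.subRight c) f

end Translation

section Grid

variable {N : ℕ} [NeZero N]

theorem sum_Lop_eq_zero (h ν : ℝ) (w : ZMod N → ℝ) : ∑ i, Lop h ν w i = 0 := by
  have hL : ∀ i, Lop h ν w i = -ν / h ^ 2 * (w (i + 1) - 2 * w i + w (i - 1)) :=
    fun i => by rw [Lop]; ring
  simp only [hL, ← Finset.mul_sum, Finset.sum_add_distrib, Finset.sum_sub_distrib,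
    Fintype.sum_comp_add_const, Fintype.sum_comp_sub_const]
  ring

theorem sum_Bop_eq_zero (h : ℝ) (m P1 P2 : ZMod N → ℝ) : ∑ i, Bop h m P1 P2 i = 0 := by
  have hB : ∀ i, Bop h m P1 P2 i = 1 / (2 * h) *
      (3 * (m * P1) i - 4 * (m * P1) (i - 1) + (m * P1) (i - 2)
        - 3 * (m * P2) i + 4 * (m * P2) (i + 1) - (m * P2) (i + 2)) :=
    fun i => by simp only [Bop, Pi.mul_apply]; ring
  simp only [hB, ← Finset.mul_sum, Finset.sum_add_distrib, Finset.sum_sub_distrib,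
    Fintype.sum_comp_add_const, Fintype.sum_comp_sub_const]
  ring

end Grid

theorem crank_nicolson_mass_conservation_general (N : ℕ) [NeZero N]
    (h τ ν : ℝ) (hτ : 0 < τ)
    (m m' P1 P2 P1' P2' : ZMod N → ℝ)
    (heq : ∀ i : ZMod N,
      (m' i - m i) / τ =
        (1 / 2) * (Lop h ν (fun j => m j + m' j) i
          - Bop h m P1 P2 i - Bop h m' P1' P2' i)) :
    h * ∑ i : ZMod N, m i = h * ∑ i : ZMod N, m' i := by
  have hrate : ∑ i, (m' i - m i) / τ = 0 := by
    simp only [heq, ← Finset.mul_sum, Finset.sum_sub_distrib,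
      sum_Lop_eq_zero, sum_Bop_eq_zero]
    ring
  rw [← Finset.sum_div, div_eq_zero_iff, Finset.sum_sub_distrib, sub_eq_zero] at hrate
  rw [hrate.resolve_right hτ.ne']

theorem crank_nicolson_mass_conservation (N : ℕ) [NeZero N] (hN : 1 ≤ N)
    (h τ ν : ℝ) (hh : 0 < h) (hτ : 0 < τ)
    (m m' P1 P2 P1' P2' : ZMod N → ℝ)
    (heq : ∀ i : ZMod N,
      (m' i - m i) / τ =
        (1 / 2) * (Lop h ν (fun j => m j + m' j) i
          - Bop h m P1 P2 i - Bop h m' P1' P2' i)) :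
    h * ∑ i : ZMod N, m i = h * ∑ i : ZMod N, m' i :=
  crank_nicolson_mass_conservation_general N h τ ν hτ m m' P1 P2 P1' P2' heq
end

section
/- Let ν ∈ ℝ, let H : ℝ × ℝ → ℝ be a Hamiltonian, let 𝓗 : ℝ × ℝ × ℝ → ℝ be continuously differentiable and consistent with H in the sense that 𝓗(x, p, p) = H(x, p) for all x, p ∈ ℝ, and let V : ℝ × ℝ → ℝ be arbitrary. Suppose u : ℝ × ℝ → ℝ, (t, x) ↦ u(t, x), is four times continuously differentiable and satisfies the Hamilton–Jacobi–Bellman equation u_t(t,x) − ν u_{xx}(t,x) + H(x, u_x(t,x)) = V(t,x) for all (t, x). Fix (t, x), and for τ, h > 0 define the Crank–Nicolson/Beam–Warming residual R(τ, h) = (u(t+τ, x) − u(t, x))/τ − (1/2)·[ ν Δ_h u(t, x) + ν Δ_h u(t+τ, x) − 𝓗(x, D_h^- u(t, x), D_h^+ u(t, x)) − 𝓗(x, D_h^- u(t+τ, x), D_h^+ u(t+τ, x)) + V(t, x) + V(t+τ, x) ], where Δ_h u(s, x) = (u(s, x+h) − 2u(s, x) + u(s, x−h))/h², D_h^- u(s,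 x) = (3u(s, x) − 4u(s, x−h) + u(s, x−2h))/(2h), and D_h^+ u(s, x) = (−3u(s, x) + 4u(s, x+h) − u(s, x+2h))/(2h). Then R(τ, h) = O(τ² + h²) as (τ, h) → (0, 0) with τ, h > 0. -/
open Filter Topology Asymptotics Set Function
open scoped Nat

/-!
Substituting the equation for `V t x` and `V (t + τ) x` splits the residual into three kinds of
error. The first is the trapezoid-rule error of `s ↦ u s x` on `[t, t + τ]`, which is `O(τ²)`.
The others are the consistency errors of `Δ_h` against `u_xx` and of the Beam–Warming quotients
against `u_x` at both time levels; Taylor's theorem with Lagrange remainder makes these `O(h²)`.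
Because `𝓗` is `C¹`, it is Lipschitz near `(x, u_x, u_x)`, so the Hamiltonian terms are `O(h²)` as
well. The Taylor remainders must be bounded uniformly in the time level `t + τ`. For this, the
`x`-derivatives of `u` are written as iterated Fréchet derivatives of the uncurried `u`. That makes
them jointly continuous, hence bounded on a compact box around `(t, x)`.
-/

noncomputable def centralSecondDiff (f : ℝ → ℝ) (x h : ℝ) : ℝ :=
  (f (x + h) - 2 * f x + f (x - h)) / h ^ 2

noncomputable def beamWarmingBackward (f : ℝ → ℝ) (x h : ℝ) : ℝ :=
  (3 * f x - 4 * f (x - h) + f (x - 2 * h)) / (2 * h)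

noncomputable def beamWarmingForward (f : ℝ → ℝ) (x h : ℝ) : ℝ :=
  (-3 * f x + 4 * f (x + h) - f (x + 2 * h)) / (2 * h)

theorem beamWarmingForward_eq_backward_neg (f : ℝ → ℝ) (x h : ℝ) :
    beamWarmingForward f x h = beamWarmingBackward f x (-h) := by
  simp only [beamWarmingForward, beamWarmingBackward, sub_neg_eq_add, mul_neg]
  ring

section Taylor

variable {f : ℝ → ℝ}

theorem abs_sub_taylor_le {n : ℕ} (hf : ContDiff ℝ n f) {x h M : ℝ}
    (hM : ∀ y, |y - x| ≤ |h| → |iteratedDeriv n f y| ≤ M) :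
    |f (x + h) - ∑ k ∈ Finset.range n, iteratedDeriv k f x * h ^ k / k !| ≤ M * |h| ^ n / n ! := by
  cases n with
  | zero => simpa using hM (x + h) (by simp)
  | succ n =>
  rcases eq_or_ne h 0 with rfl | hh
  · simp [Finset.sum_range_succ']
  have hx : x ≠ x + h := by simpa using hh
  obtain ⟨ξ, hξ, hrem⟩ := taylor_mean_remainder_lagrange_iteratedDeriv hx hf.contDiffOn
  have hpoly : taylorWithinEval f n (uIcc x (x + h)) x (x + h)
      = ∑ k ∈ Finset.range (n + 1), iteratedDeriv k f x * h ^ k / k ! := by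
    rw [taylor_within_apply]
    refine Finset.sum_congr rfl fun k hk => ?_
    rw [iteratedDerivWithin_eq_iteratedDeriv (uniqueDiffOn_uIcc hx)
      (hf.contDiffAt.of_le (by exact_mod_cast (Finset.mem_range.1 hk).le)) left_mem_uIcc,
      smul_eq_mul, add_sub_cancel_left]
    ring
  rw [← hpoly, hrem, add_sub_cancel_left, abs_div, abs_mul, abs_pow, Nat.abs_cast]
  gcongr
  exact hM ξ (by simpa using abs_sub_left_of_mem_uIcc (uIoo_subset_uIcc_self hξ))

theorem abs_centralSecondDiff_sub_le (hf : ContDiff ℝ 4 f) {x h M : ℝ} (hh : h ≠ 0)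
    (hM : ∀ y, |y - x| ≤ |h| → |iteratedDeriv 4 f y| ≤ M) :
    |centralSecondDiff f x h - deriv (deriv f) x| ≤ M / 12 * h ^ 2 := by
  have hplus := abs_sub_taylor_le hf hM
  have hminus := abs_sub_taylor_le hf (h := -h) (by simpa using hM)
  rw [← sub_eq_add_neg, abs_neg] at hminus
  have hsplit : f (x + h) - 2 * f x + f (x - h) - h ^ 2 * deriv (deriv f) x
      = (f (x + h) - ∑ k ∈ Finset.range 4, iteratedDeriv k f x * h ^ k / k !)
        + (f (x - h) - ∑ k ∈ Finset.range 4, iteratedDeriv k f x * (-h) ^ k / k !) := by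
    simp only [Finset.sum_range_succ, Finset.sum_range_zero, Nat.factorial, iteratedDeriv_zero,
      iteratedDeriv_succ']
    push_cast
    ring
  have hh2 : 0 < h ^ 2 := by positivity
  rw [centralSecondDiff, div_sub' hh2.ne', abs_div, abs_of_pos hh2, div_le_iff₀ hh2, hsplit]
  calc _ ≤ M * |h| ^ 4 / 4 ! + M * |h| ^ 4 / 4 ! :=
        (abs_add_le _ _).trans (add_le_add hplus hminus)
    _ = _ := by rw [(by decide : Even 4).pow_abs]; simp [Nat.factorial]; ring

theorem abs_beamWarmingBackward_sub_le (hf : ContDiff ℝ 3 f) {x h M : ℝ} (hh : h ≠ 0)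
    (hM : ∀ y, |y - x| ≤ 2 * |h| → |iteratedDeriv 3 f y| ≤ M) :
    |beamWarmingBackward f x h - deriv f x| ≤ M * h ^ 2 := by
  have h₁ := abs_sub_taylor_le hf (h := -h) fun y hy =>
    hM y (hy.trans (by rw [abs_neg]; linarith [abs_nonneg h]))
  have h₂ := abs_sub_taylor_le hf (h := -(2 * h)) fun y hy =>
    hM y (hy.trans_eq (by rw [abs_neg, abs_mul, abs_two]))
  rw [← sub_eq_add_neg, abs_neg] at h₁ h₂
  have hsplit : 3 * f x - 4 * f (x - h) + f (x - 2 * h) - 2 * h * deriv f x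
      = -4 * (f (x - h) - ∑ k ∈ Finset.range 3, iteratedDeriv k f x * (-h) ^ k / k !)
        + (f (x - 2 * h) - ∑ k ∈ Finset.range 3, iteratedDeriv k f x * (-(2 * h)) ^ k / k !) := by
    simp only [Finset.sum_range_succ, Finset.sum_range_zero, Nat.factorial, iteratedDeriv_zero,
      iteratedDeriv_one]
    push_cast
    ring
  rw [beamWarmingBackward, div_sub' (by positivity), abs_div, div_le_iff₀ (by positivity), hsplit]
  calc _ ≤ 4 * (M * |h| ^ 3 / 3 !) + M * |2 * h| ^ 3 / 3 ! := by
        refine (abs_add_le _ _).trans (add_le_add ?_ h₂)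
        rw [abs_mul]; norm_num; exact h₁
    _ = _ := by rw [abs_mul, abs_two]; simp [Nat.factorial]; rw [← sq_abs h]; ring

theorem abs_trapezoid_sub_le (hf : ContDiff ℝ 3 f) {t τ M : ℝ} (hτ : τ ≠ 0)
    (hM : ∀ y, |y - t| ≤ |τ| → |iteratedDeriv 3 f y| ≤ M) :
    |(f (t + τ) - f t) / τ - (deriv f t + deriv f (t + τ)) / 2| ≤ 5 * M / 12 * τ ^ 2 := by
  have hf₀ := abs_sub_taylor_le hf hM
  have hf₁ := abs_sub_taylor_le (hf.deriv' (n := 2)) (x := t) (h := τ) fun y hy => by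
    rw [← iteratedDeriv_succ']; exact hM y hy
  have hsplit : f (t + τ) - f t - τ * ((deriv f t + deriv f (t + τ)) / 2)
      = (f (t + τ) - ∑ k ∈ Finset.range 3, iteratedDeriv k f t * τ ^ k / k !)
        - τ / 2 * (deriv f (t + τ)
          - ∑ k ∈ Finset.range 2, iteratedDeriv k (deriv f) t * τ ^ k / k !) := by
    simp only [Finset.sum_range_succ, Finset.sum_range_zero, Nat.factorial, iteratedDeriv_zero,
      iteratedDeriv_succ']
    push_cast
    ring
  rw [div_sub' hτ, abs_div, div_le_iff₀ (abs_pos.2 hτ), hsplit]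
  calc _ ≤ M * |τ| ^ 3 / 3 ! + |τ| / 2 * (M * |τ| ^ 2 / 2 !) := by
        refine (abs_sub _ _).trans (add_le_add hf₀ ?_)
        rw [abs_mul, abs_div, abs_two]
        gcongr
    _ = _ := by simp [Nat.factorial]; rw [← sq_abs τ]; ring

theorem isBigO_trapezoid_sub (hf : ContDiff ℝ 3 f) (t : ℝ) :
    (fun τ => (f (t + τ) - f t) / τ - (deriv f t + deriv f (t + τ)) / 2) =O[𝓝[≠] 0]
      fun τ => τ ^ 2 := by
  obtain ⟨M, hM⟩ := (isCompact_closedBall t 1).exists_bound_of_continuousOn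
    (hf.continuous_iteratedDeriv 3 le_rfl).continuousOn
  refine IsBigO.of_bound (5 * M / 12) ?_
  filter_upwards [self_mem_nhdsWithin,
    nhdsWithin_le_nhds (Metric.closedBall_mem_nhds (0 : ℝ) one_pos)] with τ hτ hτ₁
  rw [Real.norm_eq_abs, Real.norm_eq_abs, abs_of_nonneg (sq_nonneg τ)]
  refine abs_trapezoid_sub_le hf hτ fun y hy => hM y ?_
  rw [Metric.mem_closedBall, Real.dist_eq]
  rw [Metric.mem_closedBall, Real.dist_0_eq_abs] at hτ₁
  exact hy.trans hτ₁

end Taylor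

section Slices

variable {u : ℝ → ℝ → ℝ} {n : ℕ}

theorem contDiff_uncurry_left (hu : ContDiff ℝ n (uncurry u)) (y : ℝ) :
    ContDiff ℝ n fun s => u s y :=
  hu.comp (contDiff_id.prodMk contDiff_const)

theorem contDiff_uncurry_right (hu : ContDiff ℝ n (uncurry u)) (s : ℝ) : ContDiff ℝ n (u s) :=
  hu.comp (contDiff_const.prodMk contDiff_id)

theorem iteratedDeriv_eq_iteratedFDeriv_uncurry (hu : ContDiff ℝ n (uncurry u)) {k : ℕ}
    (hk : k ≤ n) (s y : ℝ) :
    iteratedDeriv k (u s) y = iteratedFDeriv ℝ k (uncurry u) (s, y) fun _ => (0, 1) := by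
  have hslice : u s = (fun p => uncurry u ((s, 0) + p)) ∘ ContinuousLinearMap.inr ℝ ℝ ℝ := by
    ext y; simp
  have hshift : ContDiff ℝ n fun p => uncurry u ((s, 0) + p) :=
    hu.comp (contDiff_const.add contDiff_id)
  rw [iteratedDeriv_eq_iteratedFDeriv, hslice,
    ContinuousLinearMap.iteratedFDeriv_comp_right _ hshift _ (by exact_mod_cast hk),
    iteratedFDeriv_comp_add_left]
  simp

theorem continuous_iteratedDeriv_uncurry (hu : ContDiff ℝ n (uncurry u)) {k : ℕ} (hk : k ≤ n) :
    Continuous fun p : ℝ × ℝ => iteratedDeriv k (u p.1) p.2 := by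
  simp_rw [iteratedDeriv_eq_iteratedFDeriv_uncurry hu hk]
  exact (hu.continuous_iteratedFDeriv (by exact_mod_cast hk)).eval_const _

theorem exists_abs_iteratedDeriv_uncurry_le (hu : ContDiff ℝ n (uncurry u)) {k : ℕ} (hk : k ≤ n)
    (t x : ℝ) : ∃ M, ∀ s y, |s - t| ≤ 1 → |y - x| ≤ 1 → |iteratedDeriv k (u s) y| ≤ M := by
  obtain ⟨M, hM⟩ := (isCompact_closedBall (t, x) 1).exists_bound_of_continuousOn
    (continuous_iteratedDeriv_uncurry hu hk).continuousOn
  refine ⟨M, fun s y hs hy => hM (s, y) ?_⟩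
  rw [Metric.mem_closedBall, Prod.dist_eq, Real.dist_eq, Real.dist_eq]
  exact max_le hs hy

variable {α : Type*} {l : Filter α} {s h : α → ℝ} {t x : ℝ}

theorem eventually_abs_sub_le_of_tendsto {c r : ℝ} (hs : Tendsto s l (𝓝 c)) (hr : 0 < r) :
    ∀ᶠ a in l, |s a - c| ≤ r := by
  filter_upwards [hs.eventually (Metric.closedBall_mem_nhds c hr)] with a ha
  rwa [Real.dist_eq] at ha

theorem isBigO_centralSecondDiff_sub (hu : ContDiff ℝ 4 (uncurry u)) (hs : Tendsto s l (𝓝 t))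
    (hh : Tendsto h l (𝓝 0)) (hh₀ : ∀ᶠ a in l, h a ≠ 0) :
    (fun a => centralSecondDiff (u (s a)) x (h a) - deriv (deriv (u (s a))) x) =O[l]
      fun a => h a ^ 2 := by
  obtain ⟨M, hM⟩ := exists_abs_iteratedDeriv_uncurry_le hu le_rfl t x
  refine IsBigO.of_bound (M / 12) ?_
  filter_upwards [eventually_abs_sub_le_of_tendsto hs one_pos,
    eventually_abs_sub_le_of_tendsto hh one_pos, hh₀] with a hsa hha hha₀
  rw [sub_zero] at hha
  rw [Real.norm_eq_abs, Real.norm_of_nonneg (sq_nonneg _)]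
  exact abs_centralSecondDiff_sub_le (contDiff_uncurry_right hu _) hha₀
    fun y hy => hM _ _ hsa (hy.trans hha)

theorem isBigO_beamWarmingBackward_sub (hu : ContDiff ℝ 3 (uncurry u)) (hs : Tendsto s l (𝓝 t))
    (hh : Tendsto h l (𝓝 0)) (hh₀ : ∀ᶠ a in l, h a ≠ 0) :
    (fun a => beamWarmingBackward (u (s a)) x (h a) - deriv (u (s a)) x) =O[l]
      fun a => h a ^ 2 := by
  obtain ⟨M, hM⟩ := exists_abs_iteratedDeriv_uncurry_le hu le_rfl t x
  refine IsBigO.of_bound M ?_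
  filter_upwards [eventually_abs_sub_le_of_tendsto hs one_pos,
    eventually_abs_sub_le_of_tendsto hh one_half_pos, hh₀] with a hsa hha hha₀
  rw [sub_zero] at hha
  rw [Real.norm_eq_abs, Real.norm_of_nonneg (sq_nonneg _)]
  exact abs_beamWarmingBackward_sub_le (contDiff_uncurry_right hu _) hha₀
    fun y hy => hM _ _ hsa (by linarith)

theorem isBigO_beamWarmingForward_sub (hu : ContDiff ℝ 3 (uncurry u)) (hs : Tendsto s l (𝓝 t))
    (hh : Tendsto h l (𝓝 0)) (hh₀ : ∀ᶠ a in l, h a ≠ 0) :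
    (fun a => beamWarmingForward (u (s a)) x (h a) - deriv (u (s a)) x) =O[l]
      fun a => h a ^ 2 := by
  simpa only [beamWarmingForward_eq_backward_neg, neg_sq] using
    isBigO_beamWarmingBackward_sub (x := x) hu hs (by simpa using hh.neg)
      (hh₀.mono fun a => neg_ne_zero.2)

theorem isBigO_hamiltonian_beamWarming_sub {𝓗 : ℝ → ℝ → ℝ → ℝ}
    (h𝓗 : ContDiff ℝ 1 fun p : ℝ × ℝ × ℝ => 𝓗 p.1 p.2.1 p.2.2) (hu : ContDiff ℝ 3 (uncurry u))
    (hs : Tendsto s l (𝓝 t)) (hh : Tendsto h l (𝓝 0)) (hh₀ : ∀ᶠ a in l, h a ≠ 0) :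
    (fun a => 𝓗 x (beamWarmingBackward (u (s a)) x (h a)) (beamWarmingForward (u (s a)) x (h a))
      - 𝓗 x (deriv (u (s a)) x) (deriv (u (s a)) x)) =O[l] fun a => h a ^ 2 := by
  set p : α → ℝ × ℝ × ℝ := fun a => (x, deriv (u (s a)) x, deriv (u (s a)) x)
  set pₕ : α → ℝ × ℝ × ℝ := fun a =>
    (x, beamWarmingBackward (u (s a)) x (h a), beamWarmingForward (u (s a)) x (h a))
  have hdiff : (fun a => pₕ a - p a) =O[l] fun a => h a ^ 2 :=
    ((isBigO_zero _ _).prod_left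
      ((isBigO_beamWarmingBackward_sub (x := x) hu hs hh hh₀).prod_left
        (isBigO_beamWarmingForward_sub (x := x) hu hs hh hh₀))).congr_left
      fun a => by simp [p, pₕ]
  have hp : Tendsto p l (𝓝 (x, deriv (u t) x, deriv (u t) x)) := by
    have hux : Tendsto (fun a => deriv (u (s a)) x) l (𝓝 (deriv (u t) x)) := by
      simpa only [iteratedDeriv_one, comp_def] using
        ((continuous_iteratedDeriv_uncurry hu (k := 1) (by norm_num)).tendsto (t, x)).comp
          (hs.prodMk_nhds tendsto_const_nhds)
    exact tendsto_const_nhds.prodMk_nhds (hux.prodMk_nhds hux)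
  have hpₕ : Tendsto pₕ l (𝓝 (x, deriv (u t) x, deriv (u t) x)) := by
    have h0 : Tendsto (fun a => h a ^ 2) l (𝓝 0) := by simpa using hh.pow 2
    simpa using hp.add (hdiff.trans_tendsto h0)
  exact ((h𝓗.contDiffAt.hasStrictFDerivAt one_ne_zero).isBigO_sub.comp_tendsto
    (hpₕ.prodMk_nhds hp)).trans hdiff

end Slices

theorem isBigO_fst_sq (l : Filter (ℝ × ℝ)) :
    (fun q : ℝ × ℝ => q.1 ^ 2) =O[l] fun q => q.1 ^ 2 + q.2 ^ 2 :=
  isBigO_of_le _ fun q => by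
    rw [Real.norm_of_nonneg (by positivity), Real.norm_of_nonneg (by positivity)]
    linarith [sq_nonneg q.2]

theorem isBigO_snd_sq (l : Filter (ℝ × ℝ)) :
    (fun q : ℝ × ℝ => q.2 ^ 2) =O[l] fun q => q.1 ^ 2 + q.2 ^ 2 :=
  isBigO_of_le _ fun q => by
    rw [Real.norm_of_nonneg (by positivity), Real.norm_of_nonneg (by positivity)]
    linarith [sq_nonneg q.1]

theorem hjb_crank_nicolson_beam_warming_truncation_error
    (ν : ℝ) (H : ℝ → ℝ → ℝ) (𝓗 : ℝ → ℝ → ℝ → ℝ)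
    (h𝓗 : ContDiff ℝ 1 (fun p : ℝ × ℝ × ℝ => 𝓗 p.1 p.2.1 p.2.2))
    (hcons : ∀ x p : ℝ, 𝓗 x p p = H x p)
    (V : ℝ → ℝ → ℝ)
    (u : ℝ → ℝ → ℝ)
    (hu : ContDiff ℝ 4 (fun q : ℝ × ℝ => u q.1 q.2))
    (hPDE : ∀ t x : ℝ,
      deriv (fun s => u s x) t
        - ν * deriv (fun y => deriv (fun z => u t z) y) x
        + H x (deriv (fun y => u t y) x) = V t x)
    (t x : ℝ) :
    (fun q : ℝ × ℝ =>
      (u (t + q.1) x - u t x) / q.1 -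
        (1 / 2) *
          (ν * ((u t (x + q.2) - 2 * u t x + u t (x - q.2)) / q.2 ^ 2)
            + ν * ((u (t + q.1) (x + q.2) - 2 * u (t + q.1) x
                + u (t + q.1) (x - q.2)) / q.2 ^ 2)
            - 𝓗 x ((3 * u t x - 4 * u t (x - q.2) + u t (x - 2 * q.2)) / (2 * q.2))
                ((-3 * u t x + 4 * u t (x + q.2) - u t (x + 2 * q.2)) / (2 * q.2))
            - 𝓗 x ((3 * u (t + q.1) x - 4 * u (t + q.1) (x - q.2)
                  + u (t + q.1) (x - 2 * q.2)) / (2 * q.2))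
                ((-3 * u (t + q.1) x + 4 * u (t + q.1) (x + q.2)
                  - u (t + q.1) (x + 2 * q.2)) / (2 * q.2))
            + V t x + V (t + q.1) x))
      =O[𝓝[Set.Ioi (0 : ℝ) ×ˢ Set.Ioi (0 : ℝ)] (0 : ℝ × ℝ)]
      (fun q : ℝ × ℝ => q.1 ^ 2 + q.2 ^ 2) := by
  set l := 𝓝[Ioi (0 : ℝ) ×ˢ Ioi (0 : ℝ)] (0 : ℝ × ℝ)
  have hl : l ≤ 𝓝 0 := nhdsWithin_le_nhds
  have hpos : ∀ᶠ q in l, 0 < q.1 ∧ 0 < q.2 := self_mem_nhdsWithin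
  have hτ : Tendsto Prod.fst l (𝓝[≠] 0) :=
    tendsto_nhdsWithin_of_tendsto_nhds_of_eventually_within _
      ((continuous_fst.tendsto 0).mono_left hl) (hpos.mono fun q hq => hq.1.ne')
  have hh : Tendsto Prod.snd l (𝓝 0) := (continuous_snd.tendsto 0).mono_left hl
  have hh₀ : ∀ᶠ q in l, q.2 ≠ 0 := hpos.mono fun q hq => hq.2.ne'
  have hshift : Tendsto (fun q : ℝ × ℝ => t + q.1) l (𝓝 t) := by
    simpa using tendsto_const_nhds.add (hτ.mono_right nhdsWithin_le_nhds)
  have hV : ∀ s, V s x = deriv (fun s => u s x) s - ν * deriv (deriv (u s)) x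
      + 𝓗 x (deriv (u s) x) (deriv (u s) x) := fun s => by rw [← hPDE s x, hcons]
  have hA := ((isBigO_trapezoid_sub ((contDiff_uncurry_left hu x).of_le (by norm_num)) t
    ).comp_tendsto hτ).trans (isBigO_fst_sq l)
  have hB := fun s (hs : Tendsto s l (𝓝 t)) =>
    (isBigO_centralSecondDiff_sub (x := x) hu hs hh hh₀).trans (isBigO_snd_sq l)
  have hC := fun s (hs : Tendsto s l (𝓝 t)) =>
    (isBigO_hamiltonian_beamWarming_sub (x := x) h𝓗 (hu.of_le (by norm_num)) hs hh hh₀).trans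
      (isBigO_snd_sq l)
  refine ((hA.sub (((hB _ tendsto_const_nhds).add (hB _ hshift)).const_mul_left (ν / 2))).add
    (((hC _ tendsto_const_nhds).add (hC _ hshift)).const_mul_left (1 / 2))).congr_left fun q => ?_
  simp only [hV, centralSecondDiff, beamWarmingBackward, beamWarmingForward, comp_apply]
  ring
end
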